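/- arXiv:math/0609823 — 3 statements merged into one kernel-verified Lean document; each statement's English description precedes it below -/
import Mathlib

section
/- For every real h > 0, every m ∈ ℤⁿ, every multi-index α ∈ ℕⁿ, and each sign choice: Σ_{i=1}^n (m_i h) · (∂_h^{±i} G_i)(m) = |α| · (mh)_∓^{(α)}, where G_i is the lattice function G_i(m) := ((m ∓ ε_i)h)_∓^{(α)} = Π_{j≠i}(m_j h)_∓^{(α_j)} · (m_i h ∓ h)_∓^{(α_i)}, i.e. the factorial power (mh)_∓^{(α)} evaluated with the i-th coordinate shifted. -/
open Finset

noncomputable section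

/-- `1` for the forward (upper sign) choice, `-1` for the backward one. -/
def sgn (σ : Bool) : ℝ := if σ then 1 else -1

/-- Forward/backward difference `∂_h^{±i}` of a lattice function. -/
def fdiff {n : ℕ} (σ : Bool) (h : ℝ) (i : Fin n) (f : (Fin n → ℤ) → ℝ) :
    (Fin n → ℤ) → ℝ := fun m =>
  if σ then h⁻¹ • (f (m + Pi.single i 1) - f m) else h⁻¹ • (f m - f (m - Pi.single i 1))

/-- `m ∓ εᵢ` (upper sign paired with the forward difference `σ = true`). -/
def shiftB {n : ℕ} (σ : Bool) (i : Fin n) (m : Fin n → ℤ) : Fin n → ℤ :=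
  if σ then m - Pi.single i 1 else m + Pi.single i 1

/-- One-dimensional factorial power `(x)_∓^{(s)} = ∏_{k=0}^{s-1} (x ∓ k h)`
(upper sign paired with the forward difference `σ = true`). -/
def factPow (σ : Bool) (h x : ℝ) (s : ℕ) : ℝ :=
  ∏ k ∈ range s, (x - sgn σ * k * h)

/-- Multi-index factorial power `(mh)_∓^{(α)}`. -/
def mfp {n : ℕ} (σ : Bool) (h : ℝ) (m : Fin n → ℤ) (α : Fin n → ℕ) : ℝ :=
  ∏ i, factPow σ h (m i * h) (α i)

lemma factPow_succ_expand (ε h x : ℝ) (s : ℕ) :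
    (∏ k ∈ range (s+1), (x - ε * k * h))
      = (∏ k ∈ range s, (x - ε * (k+1) * h)) * x := by
  rw [Finset.prod_range_succ']
  simp only [Nat.cast_zero, mul_zero, zero_mul, sub_zero]
  congr 1
  exact Finset.prod_congr rfl fun k _ => by push_cast; ring

lemma factPow_shift_expand (ε h x : ℝ) (s : ℕ) :
    (∏ k ∈ range (s+1), (x - ε * h - ε * k * h))
      = (∏ k ∈ range s, (x - ε * (k+1) * h)) * (x - ε * (s+1) * h) := by
  rw [show (∏ k ∈ range (s+1), (x - ε * h - ε * k * h))
      = ∏ k ∈ range (s+1), (x - ε * (k+1) * h) from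
    Finset.prod_congr rfl fun k _ => by push_cast; ring]
  rw [Finset.prod_range_succ]

lemma key_gen (ε : ℝ) (hε : ε * ε = 1) {h : ℝ} (hh : h ≠ 0) (x : ℝ) (s : ℕ) :
    x * (ε * h⁻¹ * ((∏ k ∈ range s, (x - ε * k * h))
        - ∏ k ∈ range s, (x - ε * h - ε * k * h)))
      = s * ∏ k ∈ range s, (x - ε * k * h) := by
  cases s with
  | zero => simp
  | succ s =>
    rw [factPow_succ_expand, factPow_shift_expand]
    set P := ∏ k ∈ range s, (x - ε * (k+1) * h) with hP
    have h1 : x * (ε * h⁻¹ * (P * x - P * (x - ε * (s+1) * h)))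
        = (ε * ε) * (h⁻¹ * h) * (((s:ℝ)+1) * (P * x)) := by ring
    rw [h1, hε, inv_mul_cancel₀ hh, one_mul, one_mul]
    push_cast; ring

lemma keyT {h : ℝ} (hh : h ≠ 0) (x : ℝ) (s : ℕ) :
    x * (h⁻¹ * (factPow true h x s - factPow true h (x - h) s))
      = s * factPow true h x s := by
  have K := key_gen 1 (by norm_num) hh x s
  simp only [one_mul] at K
  simp only [factPow, sgn, if_true, one_mul]
  exact K

lemma keyF {h : ℝ} (hh : h ≠ 0) (x : ℝ) (s : ℕ) :
    x * (h⁻¹ * (factPow false h (x + h) s - factPow false h x s))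
      = s * factPow false h x s := by
  have K := key_gen (-1) (by norm_num) hh x s
  simp only [neg_mul, one_mul, sub_neg_eq_add] at K
  simp only [factPow, sgn, if_false, Bool.false_eq_true, ite_false, neg_mul, one_mul,
    sub_neg_eq_add]
  linear_combination K

lemma summand {n : ℕ} (σ : Bool) {h : ℝ} (hh : h ≠ 0) (i : Fin n)
    (m : Fin n → ℤ) (α : Fin n → ℕ) :
    ((m i : ℝ) * h) * fdiff σ h i (fun m' => mfp σ h (shiftB σ i m') α) m
      = (α i : ℝ) * mfp σ h m α := by
  have split : ∀ v : Fin n → ℤ, mfp σ h v α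
      = factPow σ h ((v i : ℝ) * h) (α i)
        * ∏ j ∈ univ.erase i, factPow σ h ((v j : ℝ) * h) (α j) :=
    fun v => (Finset.mul_prod_erase univ _ (mem_univ i)).symm
  set Q := ∏ j ∈ univ.erase i, factPow σ h ((m j : ℝ) * h) (α j) with hQ
  have hQm : mfp σ h m α = factPow σ h ((m i : ℝ) * h) (α i) * Q := split m
  cases σ with
  | true =>
    have e1 : shiftB true i (m + Pi.single i 1) = m := by
      simp [shiftB]
    have e2 : mfp true h (shiftB true i m) α
        = factPow true h ((m i : ℝ) * h - h) (α i) * Q := by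
      rw [split]
      congr 1
      · congr 1
        simp only [shiftB, if_true, Pi.sub_apply, Pi.single_eq_same]
        push_cast; ring
      · exact Finset.prod_congr rfl fun j hj => by
          have hji : j ≠ i := Finset.ne_of_mem_erase hj
          simp [shiftB, Pi.single_eq_of_ne hji]
    simp only [fdiff, if_true, smul_eq_mul, e1, e2, hQm]
    linear_combination Q * keyT hh ((m i : ℝ) * h) (α i)
  | false =>
    have e1 : shiftB false i (m - Pi.single i 1) = m := by
      simp [shiftB]
    have e2 : mfp false h (shiftB false i m) α
        = factPow false h ((m i : ℝ) * h + h) (α i) * Q := by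
      rw [split]
      congr 1
      · congr 1
        simp only [shiftB, Bool.false_eq_true, ite_false, Pi.add_apply, Pi.single_eq_same]
        push_cast; ring
      · exact Finset.prod_congr rfl fun j hj => by
          have hji : j ≠ i := Finset.ne_of_mem_erase hj
          simp [shiftB, Pi.single_eq_of_ne hji]
    simp only [fdiff, Bool.false_eq_true, ite_false, smul_eq_mul, e1, e2, hQm]
    linear_combination Q * keyF hh ((m i : ℝ) * h) (α i)

/-- Lemma 3.1: `Σᵢ (mᵢ h) (∂_h^{±i} ((· ∓ εᵢ)h)_∓^{(α)})(m) = |α| (mh)_∓^{(α)}`. -/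
theorem euler_identity_for_factorial_powers
    (n : ℕ) (hn : 1 ≤ n) (h : ℝ) (hh : 0 < h) (σ : Bool)
    (m : Fin n → ℤ) (α : Fin n → ℕ) :
    ∑ i, ((m i : ℝ) * h) *
        fdiff σ h i (fun m' => mfp σ h (shiftB σ i m') α) m
      = ((∑ i, α i : ℕ) : ℝ) * mfp σ h m α := by
  rw [Finset.sum_congr rfl fun i _ => summand σ (ne_of_gt hh) i m α,
    Nat.cast_sum, Finset.sum_mul]
end
end

section
/- The discrete homogeneous powers approximate the powers of the vector variable: for every x ∈ ℝⁿ, every s ∈ ℕ, and each sign choice, H_s^±(x; h) → x^s in Cl_{0,n} as h → 0⁺, where x^s is the s-th power of the Clifford vector x = Σ_{i=1}^n x_i e_i; equivalently, H_{2k}^±(x;h) → (−1)^k |x|^{2k} and H_{2k+1}^±(x;h) → (−1)^k |x|^{2k} Σ_i x_i e_i. -/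
open Finset

noncomputable section

/-- The quadratic form on `ℝⁿ` whose Clifford algebra is `Cl_{0,n}`:
`Q(x) = −(x₁² + ⋯ + xₙ²)`, so that the generators satisfy `eᵢeⱼ + eⱼeᵢ = −2δᵢⱼ`. -/
def negQ (n : ℕ) : QuadraticForm ℝ (Fin n → ℝ) :=
  QuadraticMap.weightedSumSquares ℝ (fun _ : Fin n => (-1 : ℝ))

/-- The Clifford algebra `Cl_{0,n}`. -/
abbrev Cl (n : ℕ) := CliffordAlgebra (negQ n)

/-- The generators `e i` of `Cl_{0,n}`. -/
def eCl (n : ℕ) (i : Fin n) : Cl n := CliffordAlgebra.ι (negQ n) (Pi.single i 1)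

/-- Multi-index factorial power `(x)_∓^{(α)} = ∏ᵢ ∏_{k=0}^{αᵢ-1}(xᵢ ∓ k h)` at a real point. -/
def mfpR {n : ℕ} (σ : Bool) (h : ℝ) (x : Fin n → ℝ) (α : Fin n → ℕ) : ℝ :=
  ∏ i, ∏ k ∈ range (α i), (x i - sgn σ * k * h)

/-- The Clifford vector `x = Σᵢ xᵢ eᵢ`. -/
def vecR (n : ℕ) (x : Fin n → ℝ) : Cl n := ∑ i, x i • eCl n i

/-- The discrete homogeneous powers `H_s^±(x; h)` evaluated at a real point `x` with
mesh width `h`. -/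
def HpowR (n : ℕ) (σ : Bool) (h : ℝ) (s : ℕ) (x : Fin n → ℝ) : Cl n :=
  if s % 2 = 0 then
    algebraMap ℝ (Cl n) (∑ α ∈ Finset.Nat.antidiagonalTuple n (s / 2),
      ((-1 : ℝ) ^ (s / 2) * (Nat.factorial (s / 2) : ℝ) / (∏ i, (Nat.factorial (α i) : ℝ)))
        * mfpR σ h x (fun j => 2 * α j))
  else
    ∑ α ∈ Finset.Nat.antidiagonalTuple n (s / 2), ∑ i,
      (((-1 : ℝ) ^ (s / 2) * (Nat.factorial (s / 2) : ℝ) / (∏ j, (Nat.factorial (α j) : ℝ)))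
          * mfpR σ h x (fun j => 2 * α j + if j = i then 1 else 0)) • eCl n i

/-!
At `h = 0` every factorial power `(x)_∓^{(α)}` collapses to the monomial `x^α`, so by the
multinomial theorem `H_{2k}(x; 0) = (-1)^k (∑ xᵢ²)^k` and `H_{2k+1}(x; 0) = (-1)^k (∑ xᵢ²)^k x`;
since `x² = -∑ xᵢ²` in `Cl_{0,n}`, these are `x^{2k}` and `x^{2k+1}`. For fixed `x` and `s`,
`H_s(x; h)` is polynomial, hence continuous, in `h`, so its limit as `h → 0⁺` is its value at `0`.
-/

open Nat

lemma Nat.cast_multinomial_eq_div {K ι : Type*} [Field K] [CharZero K] (s : Finset ι)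
    (α : ι → ℕ) :
    (multinomial s α : K) = (∑ i ∈ s, α i)! / ∏ i ∈ s, ((α i)! : K) := by
  have hprod : (∏ i ∈ s, ((α i)! : K)) ≠ 0 :=
    prod_ne_zero_iff.mpr fun i _ => cast_ne_zero.mpr (factorial_ne_zero _)
  rw [eq_div_iff hprod, ← multinomial_spec s α]
  push_cast
  ring

theorem sum_pow_eq_sum_antidiagonalTuple {K : Type*} [Field K] [CharZero K] (n k : ℕ)
    (y : Fin n → K) :
    (∑ i, y i) ^ k =
      ∑ α ∈ Nat.antidiagonalTuple n k, (k ! / ∏ i, ((α i)! : K)) * ∏ i, y i ^ α i := by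
  rw [sum_pow_eq_sum_piAntidiag, piAntidiag_univ_fin_eq_antidiagonalTuple]
  refine sum_congr rfl fun α hα => ?_
  rw [Nat.cast_multinomial_eq_div, Nat.mem_antidiagonalTuple.mp hα]

lemma prod_pow_two_mul_add_ite {ι M : Type*} [Fintype ι] [DecidableEq ι] [CommMonoid M]
    (y : ι → M) (α : ι → ℕ) (i : ι) :
    ∏ j, y j ^ (2 * α j + if j = i then 1 else 0) = (∏ j, (y j ^ 2) ^ α j) * y i := by
  simp_rw [pow_add, pow_mul, prod_mul_distrib, pow_ite, pow_one, pow_zero, prod_ite_eq']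
  simp

section

variable {n : ℕ}

lemma mfpR_zero (σ : Bool) (x : Fin n → ℝ) (α : Fin n → ℕ) :
    mfpR σ 0 x α = ∏ i, x i ^ α i := by
  simp [mfpR]

@[fun_prop]
lemma continuous_mfpR (σ : Bool) (x : Fin n → ℝ) (α : Fin n → ℕ) :
    Continuous fun h : ℝ => mfpR σ h x α := by
  unfold mfpR
  fun_prop

lemma vecR_eq_ι (x : Fin n → ℝ) : vecR n x = CliffordAlgebra.ι (negQ n) x := by
  simp_rw [vecR, eCl, ← LinearMap.map_smul, ← map_sum]
  congr 1
  ext j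
  simp [Pi.single_apply]

lemma vecR_sq (x : Fin n → ℝ) : vecR n x ^ 2 = algebraMap ℝ (Cl n) (-∑ i, x i ^ 2) := by
  rw [vecR_eq_ι, sq, CliffordAlgebra.ι_sq_scalar]
  congr 1
  simp [negQ, QuadraticMap.weightedSumSquares_apply, sq]

lemma vecR_pow_two_mul (x : Fin n → ℝ) (k : ℕ) :
    vecR n x ^ (2 * k) = algebraMap ℝ (Cl n) ((-1) ^ k * (∑ i, x i ^ 2) ^ k) := by
  rw [pow_mul, vecR_sq, ← map_pow, neg_pow]

lemma HpowR_two_mul (σ : Bool) (h : ℝ) (k : ℕ) (x : Fin n → ℝ) :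
    HpowR n σ h (2 * k) x = algebraMap ℝ (Cl n) (∑ α ∈ Nat.antidiagonalTuple n k,
      ((-1) ^ k * k ! / ∏ i, ((α i)! : ℝ)) * mfpR σ h x (fun j => 2 * α j)) := by
  rw [HpowR, if_pos (by omega), Nat.mul_div_cancel_left k two_pos]

lemma HpowR_two_mul_add_one (σ : Bool) (h : ℝ) (k : ℕ) (x : Fin n → ℝ) :
    HpowR n σ h (2 * k + 1) x = ∑ α ∈ Nat.antidiagonalTuple n k, ∑ i,
      (((-1) ^ k * k ! / ∏ j, ((α j)! : ℝ)) *
        mfpR σ h x (fun j => 2 * α j + if j = i then 1 else 0)) • eCl n i := by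
  rw [HpowR, if_neg (by omega), show (2 * k + 1) / 2 = k by omega]

lemma HpowR_zero_two_mul (σ : Bool) (k : ℕ) (x : Fin n → ℝ) :
    HpowR n σ 0 (2 * k) x = vecR n x ^ (2 * k) := by
  rw [HpowR_two_mul, vecR_pow_two_mul, sum_pow_eq_sum_antidiagonalTuple, mul_sum]
  congr 1
  refine sum_congr rfl fun α _ => ?_
  simp_rw [mfpR_zero, pow_mul]
  ring

lemma HpowR_zero_two_mul_add_one (σ : Bool) (k : ℕ) (x : Fin n → ℝ) :
    HpowR n σ 0 (2 * k + 1) x = vecR n x ^ (2 * k + 1) := by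
  rw [HpowR_two_mul_add_one, pow_succ, vecR_pow_two_mul, vecR, mul_sum, sum_comm]
  refine sum_congr rfl fun i _ => ?_
  rw [← Algebra.smul_def, smul_smul, ← sum_smul, sum_pow_eq_sum_antidiagonalTuple]
  congr 1
  rw [mul_sum, sum_mul]
  refine sum_congr rfl fun α _ => ?_
  rw [mfpR_zero, prod_pow_two_mul_add_ite]
  ring

lemma HpowR_zero (σ : Bool) (s : ℕ) (x : Fin n → ℝ) : HpowR n σ 0 s x = vecR n x ^ s := by
  obtain ⟨k, rfl | rfl⟩ := Nat.even_or_odd' s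
  · exact HpowR_zero_two_mul σ k x
  · exact HpowR_zero_two_mul_add_one σ k x

lemma continuous_HpowR [TopologicalSpace (Cl n)] [ContinuousAdd (Cl n)]
    [ContinuousSMul ℝ (Cl n)] (σ : Bool) (s : ℕ) (x : Fin n → ℝ) :
    Continuous fun h : ℝ => HpowR n σ h s x := by
  unfold HpowR
  simp only [Algebra.algebraMap_eq_smul_one]
  split_ifs <;> fun_prop

end

theorem Hpow_tendsto_vector_power_general (n : ℕ) (σ : Bool)
    (x : Fin n → ℝ) (s : ℕ) :
    letI : TopologicalSpace (Cl n) := moduleTopology ℝ (Cl n)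
    Filter.Tendsto (fun h : ℝ => HpowR n σ h s x) (nhdsWithin 0 (Set.Ioi 0))
      (nhds (vecR n x ^ s)) := by
  let : TopologicalSpace (Cl n) := moduleTopology ℝ (Cl n)
  have : IsModuleTopology ℝ (Cl n) := ⟨rfl⟩
  have := IsModuleTopology.toContinuousAdd ℝ (Cl n)
  have := IsModuleTopology.toContinuousSMul ℝ (Cl n)
  rw [← HpowR_zero σ s x]
  exact ((continuous_HpowR σ s x).tendsto 0).mono_left nhdsWithin_le_nhds

/-- The discrete homogeneous powers approximate the powers of the vector variable:
`H_s^±(x; h) → x^s` in `Cl_{0,n}` (with its canonical topology as a finite-dimensional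
real module) as `h → 0⁺`. -/
theorem Hpow_tendsto_vector_power (n : ℕ) (hn : 1 ≤ n) (σ : Bool)
    (x : Fin n → ℝ) (s : ℕ) :
    letI : TopologicalSpace (Cl n) := moduleTopology ℝ (Cl n)
    Filter.Tendsto (fun h : ℝ => HpowR n σ h s x) (nhdsWithin 0 (Set.Ioi 0))
      (nhds (vecR n x ^ s)) :=
  Hpow_tendsto_vector_power_general n σ x s
end
end

section
/- Factorization of the discrete Laplacian: for every h > 0 and every quaternion-valued lattice function f : ℤ³ → ℍ, D_h^{+−}(D_h^{−+} f) = −Δ_h f = D_h^{−+}(D_h^{+−} f), where Δ_h acts componentwise. -/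
open Finset Quaternion

noncomputable section

/-- Forward/backward difference `∂_h^{±l}` on the lattice `ℤ³`. -/
def pd {A : Type*} [AddCommGroup A] [Module ℝ A] (σ : Bool) (h : ℝ) (l : Fin 3)
    (f : (Fin 3 → ℤ) → A) : (Fin 3 → ℤ) → A := fun m =>
  if σ then h⁻¹ • (f (m + Pi.single l 1) - f m) else h⁻¹ • (f m - f (m - Pi.single l 1))

/-- Discrete gradient `grad_h^± φ = (∂_h^{±1}φ, ∂_h^{±2}φ, ∂_h^{±3}φ)`. -/
def grad3 (σ : Bool) (h : ℝ) (φ : (Fin 3 → ℤ) → ℝ) : (Fin 3 → ℤ) → (Fin 3 → ℝ) :=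
  fun m l => pd σ h l φ m

/-- Discrete divergence `div_h^± g = Σ_l ∂_h^{±l} g_l`. -/
def div3 (σ : Bool) (h : ℝ) (g : (Fin 3 → ℤ) → (Fin 3 → ℝ)) : (Fin 3 → ℤ) → ℝ :=
  fun m => ∑ l, pd σ h l (fun m' => g m' l) m

/-- Discrete curl
`curl_h^± g = (∂_h^{±2}g₃ − ∂_h^{±3}g₂, ∂_h^{±3}g₁ − ∂_h^{±1}g₃, ∂_h^{±1}g₂ − ∂_h^{±2}g₁)`. -/
def curl3 (σ : Bool) (h : ℝ) (g : (Fin 3 → ℤ) → (Fin 3 → ℝ)) :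
    (Fin 3 → ℤ) → (Fin 3 → ℝ) := fun m =>
  ![pd σ h 1 (fun m' => g m' 2) m - pd σ h 2 (fun m' => g m' 1) m,
    pd σ h 2 (fun m' => g m' 0) m - pd σ h 0 (fun m' => g m' 2) m,
    pd σ h 0 (fun m' => g m' 1) m - pd σ h 1 (fun m' => g m' 0) m]

/-- The discrete Laplacian `(Δ_h f)(m) = Σ_l (f(m+ε_l) + f(m−ε_l) − 2f(m))/h²`,
acting componentwise. -/
def lap3 {A : Type*} [AddCommGroup A] [Module ℝ A] (h : ℝ) (f : (Fin 3 → ℤ) → A) :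
    (Fin 3 → ℤ) → A := fun m =>
  (h ^ 2)⁻¹ • ∑ l, (f (m + Pi.single l 1) + f (m - Pi.single l 1) - (2 : ℝ) • f m)

/-- The quaternion with real part `r` and vector part `v` (a triple of real lattice values
is identified with the pure quaternion `v₁ i + v₂ j + v₃ k`). -/
def toQ (r : ℝ) (v : Fin 3 → ℝ) : ℍ[ℝ] := ⟨r, v 0, v 1, v 2⟩

/-- The vector part `Vec f = (f¹, f², f³)` of a quaternion-valued lattice function. -/
def vecf (f : (Fin 3 → ℤ) → ℍ[ℝ]) : (Fin 3 → ℤ) → (Fin 3 → ℝ) :=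
  fun m => ![(f m).imI, (f m).imJ, (f m).imK]

/-- The difference Dirac operator `D_h^{−+} f = −div_h^− Vec f + grad_h^− f⁰ + curl_h^+ Vec f`. -/
def Dmp (h : ℝ) (f : (Fin 3 → ℤ) → ℍ[ℝ]) : (Fin 3 → ℤ) → ℍ[ℝ] := fun m =>
  toQ (-(div3 false h (vecf f) m))
    (fun l => grad3 false h (fun m' => (f m').re) m l + curl3 true h (vecf f) m l)

/-- The difference Dirac operator `D_h^{+−} f = −div_h^+ Vec f + grad_h^+ f⁰ + curl_h^− Vec f`. -/
def Dpm (h : ℝ) (f : (Fin 3 → ℤ) → ℍ[ℝ]) : (Fin 3 → ℤ) → ℍ[ℝ] := fun m =>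
  toQ (-(div3 true h (vecf f) m))
    (fun l => grad3 true h (fun m' => (f m').re) m l + curl3 false h (vecf f) m l)

/-- The pure quaternion `mh = (m₁h) i + (m₂h) j + (m₃h) k`. -/
def vecQ3 (h : ℝ) (m : Fin 3 → ℤ) : ℍ[ℝ] :=
  toQ 0 (fun l => (m l : ℝ) * h)

/-- The factorial power `(mh)_+^{(α)}` (for `pos = true`, factors `m_l h + k h`) resp.
`(mh)_−^{(α)}` (for `pos = false`, factors `m_l h − k h`). -/
def mfp3 (pos : Bool) (h : ℝ) (m : Fin 3 → ℤ) (α : Fin 3 → ℕ) : ℝ :=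
  ∏ l, ∏ k ∈ range (α l), ((m l : ℝ) * h + (if pos then 1 else -1) * k * h)

/-- `Π_k`: the real span of the lattice functions `m ↦ (mh)^{(α)} a` with `|α| ≤ k`,
`a ∈ ℍ`.  `Π_k^−` is `PiLe3 true h k` (it uses the `(mh)_+` factorial powers), and
`Π_k^+` is `PiLe3 false h k`. -/
def PiLe3 (pos : Bool) (h : ℝ) (k : ℕ) : Submodule ℝ ((Fin 3 → ℤ) → ℍ[ℝ]) :=
  Submodule.span ℝ {f | ∃ (α : Fin 3 → ℕ) (a : ℍ[ℝ]),
    (∑ l, α l) ≤ k ∧ f = fun m => mfp3 pos h m α • a}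

/-- The real span of the lattice functions `m ↦ (mh)^{(α)} a` with `|α| = k`. -/
def PiEq3 (pos : Bool) (h : ℝ) (k : ℕ) : Submodule ℝ ((Fin 3 → ℤ) → ℍ[ℝ]) :=
  Submodule.span ℝ {f | ∃ (α : Fin 3 → ℕ) (a : ℍ[ℝ]),
    (∑ l, α l) = k ∧ f = fun m => mfp3 pos h m α • a}

set_option maxHeartbeats 1000000 in
/-- Factorization of the discrete Laplacian:
`D_h^{+−} D_h^{−+} f = −Δ_h f = D_h^{−+} D_h^{+−} f`. -/
theorem dirac_factorizes_laplacian (h : ℝ) (hh : 0 < h) (f : (Fin 3 → ℤ) → ℍ[ℝ]) :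
    Dpm h (Dmp h f) = (fun m => -lap3 h f m) ∧
    Dmp h (Dpm h f) = (fun m => -lap3 h f m) := by
  have r3 : (3 : ℍ[ℝ]).re = 3 := rfl
  have i3 : (3 : ℍ[ℝ]).imI = 0 := rfl
  have j3 : (3 : ℍ[ℝ]).imJ = 0 := rfl
  have k3 : (3 : ℍ[ℝ]).imK = 0 := rfl
  have c10 : (Pi.single 1 1 : Fin 3 → ℤ) + Pi.single 0 1 = Pi.single 0 1 + Pi.single 1 1 :=
    add_comm _ _
  have c20 : (Pi.single 2 1 : Fin 3 → ℤ) + Pi.single 0 1 = Pi.single 0 1 + Pi.single 2 1 :=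
    add_comm _ _
  have c21 : (Pi.single 2 1 : Fin 3 → ℤ) + Pi.single 1 1 = Pi.single 1 1 + Pi.single 2 1 :=
    add_comm _ _
  constructor <;> (funext m; apply QuaternionAlgebra.ext) <;>
    (simp [Dpm, Dmp, toQ, div3, grad3, curl3, vecf, lap3, pd,
        Fin.sum_univ_three, smul_eq_mul,
        add_assoc, sub_sub, sub_add_eq_add_sub, add_sub_cancel_right, two_smul, c10, c20, c21]
     ring_nf
     simp only [r3, i3, j3, k3, mul_zero, zero_mul, add_zero, zero_add, sub_zero, neg_zero]
     try ring)
end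
end
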